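/- arXiv:2407.02020 — 4 statements merged into one kernel-verified Lean document; each statement's English description precedes it below -/
import Mathlib

section
/- Let F : ℝ^d → ℝ be μ_f-strongly convex and L_f-smooth, let A ∈ ℝ^{p×d} with σ_max²(A) ≤ L_A, let W' ∈ ℝ^{p×p} be symmetric PSD with λ_min⁺(W')² ≥ μ_{W'} and λ_max(W')² ≤ L_{W'}, and set r = μ_f/(2L_A), γ² = (μ_A + L_A)/μ_{W'} for some 0 < μ_A ≤ L_A. Define G(x,y) = F(x) + (r/2)‖Ax + γ W' y − b‖². Then for all x, x' ∈ ℝ^d and y, y' with y' − y ∈ range(W'), the Bregman divergence of G satisfies D_G(x',y'; x,y) ≥ (μ_f/2)·min{1/2, (μ_A + L_A)/(4L_A)}·(‖x'−x‖² + ‖y'−y‖²). -/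
/-!
Subtracting the linearisation turns the quadratic part of `G` into `(r/2)‖A u + γ W' v‖²`, where
`u = x' - x` and `v = y' - y`, so `D_G = D_F + (r/2)‖A u + γ W' v‖²`. Strong convexity gives
`D_F ≥ (μ_f/2)‖u‖²`. By `‖c‖² ≤ 2‖a + c‖² + 2‖a‖²`, together with `‖A u‖² ≤ L_A ‖u‖²` and (as `v`
lies in the range of `W'`) `‖γ W' v‖² ≥ γ² μ_{W'} ‖v‖² = (μ_A + L_A)‖v‖²`, the coupling term is at
least `(r/2)((μ_A + L_A)/2 ‖v‖² - L_A ‖u‖²)`. The choice `r = μ_f/(2L_A)` makes the negative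
`‖u‖²` term eat only half of `D_F`.
-/

open Matrix

section DotProduct

variable {ι κ ι' R : Type*} [Fintype ι] [Fintype κ] [Fintype ι']

section Ordered

variable [CommRing R] [LinearOrder R] [IsStrictOrderedRing R]

lemma dotProduct_self_nonneg (v : ι → R) : 0 ≤ v ⬝ᵥ v :=
  Fintype.sum_nonneg fun _ => mul_self_nonneg _

lemma dotProduct_self_le_two_mul_add (a c : ι → R) :
    c ⬝ᵥ c ≤ 2 * ((a + c) ⬝ᵥ (a + c)) + 2 * (a ⬝ᵥ a) := by
  have h := dotProduct_self_nonneg ((2 : R) • a + c)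
  simp only [add_dotProduct, dotProduct_add, smul_dotProduct, dotProduct_smul, smul_eq_mul,
    dotProduct_comm c a] at h ⊢
  linarith

end Ordered

lemma residual_sq_bregman [CommRing R] (A : Matrix κ ι R) (B : Matrix κ ι' R) (b : κ → R)
    (x x' : ι → R) (y y' : ι' → R) :
    (A *ᵥ x' + B *ᵥ y' - b) ⬝ᵥ (A *ᵥ x' + B *ᵥ y' - b)
        - (A *ᵥ x + B *ᵥ y - b) ⬝ᵥ (A *ᵥ x + B *ᵥ y - b)
        - 2 * ((Aᵀ *ᵥ (A *ᵥ x + B *ᵥ y - b)) ⬝ᵥ (x' - x)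
          + (Bᵀ *ᵥ (A *ᵥ x + B *ᵥ y - b)) ⬝ᵥ (y' - y))
      = (A *ᵥ (x' - x) + B *ᵥ (y' - y)) ⬝ᵥ (A *ᵥ (x' - x) + B *ᵥ (y' - y)) := by
  set ρ := A *ᵥ x + B *ᵥ y - b
  set Δ := A *ᵥ (x' - x) + B *ᵥ (y' - y)
  have hres : A *ᵥ x' + B *ᵥ y' - b = ρ + Δ := by
    simp only [ρ, Δ, mulVec_sub]
    abel
  have hgrad : (Aᵀ *ᵥ ρ) ⬝ᵥ (x' - x) + (Bᵀ *ᵥ ρ) ⬝ᵥ (y' - y) = ρ ⬝ᵥ Δ := by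
    rw [dotProduct_comm, dotProduct_transpose_mulVec, dotProduct_comm (Bᵀ *ᵥ ρ),
      dotProduct_transpose_mulVec, ← dotProduct_add]
  rw [hres, hgrad]
  simp only [add_dotProduct, dotProduct_add, dotProduct_comm Δ ρ]
  ring

end DotProduct

lemma min_mul_add_le {a b U V : ℝ} (hU : 0 ≤ U) (hV : 0 ≤ V) :
    min a b * (U + V) ≤ a * U + b * V := by
  nlinarith [min_le_left a b, min_le_right a b]

theorem stmt5_general (d p : ℕ) (μf Lf LA μA μW r γ : ℝ)
    (hμf : 0 < μf) (hμA : 0 < μA) (hμALA : μA ≤ LA)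
    (hμW : 0 < μW)
    (F : (Fin d → ℝ) → ℝ) (gF : (Fin d → ℝ) → (Fin d → ℝ))
    (hF : ∀ x x' : Fin d → ℝ,
      μf / 2 * ((x' - x) ⬝ᵥ (x' - x)) ≤ F x' - F x - (gF x ⬝ᵥ (x' - x)) ∧
      F x' - F x - (gF x ⬝ᵥ (x' - x)) ≤ Lf / 2 * ((x' - x) ⬝ᵥ (x' - x)))
    (A : Matrix (Fin p) (Fin d) ℝ)
    (hA : ∀ v : Fin d → ℝ, (A.mulVec v) ⬝ᵥ (A.mulVec v) ≤ LA * (v ⬝ᵥ v))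
    (W' : Matrix (Fin p) (Fin p) ℝ) (hWsymm : W'ᵀ = W')
    (hWlow : ∀ y ∈ Set.range W'.mulVec,
      μW * (y ⬝ᵥ y) ≤ (W'.mulVec y) ⬝ᵥ (W'.mulVec y))
    (hr : r = μf / (2 * LA)) (hγ2 : γ ^ 2 = (μA + LA) / μW)
    (b : Fin p → ℝ)
    (G : (Fin d → ℝ) → (Fin p → ℝ) → ℝ)
    (hG : ∀ x y, G x y = F x +
      r / 2 * ((A.mulVec x + γ • W'.mulVec y - b) ⬝ᵥ (A.mulVec x + γ • W'.mulVec y - b))) :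
    ∀ (x x' : Fin d → ℝ) (y y' : Fin p → ℝ), (∃ w, y' - y = W'.mulVec w) →
      μf / 2 * min (1 / 2) ((μA + LA) / (4 * LA))
          * ((x' - x) ⬝ᵥ (x' - x) + (y' - y) ⬝ᵥ (y' - y))
        ≤ G x' y' - G x y
          - ((gF x + r • Aᵀ.mulVec (A.mulVec x + γ • W'.mulVec y - b)) ⬝ᵥ (x' - x))
          - (((r * γ) • W'.mulVec (A.mulVec x + γ • W'.mulVec y - b)) ⬝ᵥ (y' - y)) := by
  rintro x x' y y' ⟨w, hw⟩
  set U := (x' - x) ⬝ᵥ (x' - x)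
  set V := (y' - y) ⬝ᵥ (y' - y)
  set Q := (A *ᵥ (x' - x) + γ • W' *ᵥ (y' - y)) ⬝ᵥ (A *ᵥ (x' - x) + γ • W' *ᵥ (y' - y))
  have hbregman := residual_sq_bregman A (γ • W') b x x' y y'
  simp only [smul_mulVec, transpose_smul, hWsymm, smul_dotProduct, smul_eq_mul] at hbregman
  have hW : (μA + LA) * V ≤ (γ • W' *ᵥ (y' - y)) ⬝ᵥ (γ • W' *ᵥ (y' - y)) :=
    calc (μA + LA) * V = γ ^ 2 * (μW * V) := by rw [hγ2]; field_simp
      _ ≤ γ ^ 2 * ((W' *ᵥ (y' - y)) ⬝ᵥ (W' *ᵥ (y' - y))) := by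
        gcongr
        exact hWlow _ ⟨w, hw.symm⟩
      _ = _ := by simp only [smul_dotProduct, dotProduct_smul, smul_eq_mul]; ring
  have hQ : (μA + LA) / 2 * V - LA * U ≤ Q := by
    linarith [hA (x' - x), dotProduct_self_le_two_mul_add (A *ᵥ (x' - x)) (γ • W' *ᵥ (y' - y))]
  have hLA : 0 < LA := hμA.trans_le hμALA
  have hr0 : 0 < r := by rw [hr]; positivity
  rw [hG, hG, add_dotProduct]
  simp only [smul_dotProduct, smul_eq_mul]
  calc μf / 2 * min (1 / 2) ((μA + LA) / (4 * LA)) * (U + V)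
      ≤ μf / 2 * (1 / 2 * U + (μA + LA) / (4 * LA) * V) := by
        rw [mul_assoc]
        exact mul_le_mul_of_nonneg_left
          (min_mul_add_le (dotProduct_self_nonneg _) (dotProduct_self_nonneg _)) (by positivity)
    _ = μf / 2 * U + r / 2 * ((μA + LA) / 2 * V - LA * U) := by
        rw [hr]; field_simp; ring
    _ ≤ (F x' - F x - gF x ⬝ᵥ (x' - x)) + r / 2 * Q := by
        gcongr
        exact (hF x x').1
    _ = _ := by linear_combination (-(r / 2)) * hbregman

/-- Lemma 1, lower bound: with `r = μ_f/(2L_A)`, `γ² = (μ_A+L_A)/μ_{W'}`,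
`G(x,y) = F(x) + (r/2)‖Ax + γW'y − b‖²` satisfies, for `y' − y ∈ range W'`, the Bregman
divergence lower bound
`D_G(x',y';x,y) ≥ (μ_f/2)·min{1/2, (μ_A+L_A)/(4L_A)}·(‖x'−x‖² + ‖y'−y‖²)`.
Here squared norms and inner products are written via `⬝ᵥ`, `F` is `μ_f`-strongly convex
and `L_f`-smooth with gradient `gF`, `σ_max²(A) ≤ L_A`, `W'` is symmetric PSD with
`λ_min⁺(W')² ≥ μ_{W'}` and `λ_max(W')² ≤ L_{W'}`, and the gradient of `G` at `(x,y)` is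
`(gF x + r·Aᵀ(res), rγ·W'(res))` with `res = Ax + γW'y − b`. -/
theorem stmt5 (d p : ℕ) (μf Lf LA μA LW μW r γ : ℝ)
    (hμf : 0 < μf) (hμfLf : μf ≤ Lf) (hμA : 0 < μA) (hμALA : μA ≤ LA)
    (hμW : 0 < μW) (hμWLW : μW ≤ LW)
    (F : (Fin d → ℝ) → ℝ) (gF : (Fin d → ℝ) → (Fin d → ℝ))
    (hF : ∀ x x' : Fin d → ℝ,
      μf / 2 * ((x' - x) ⬝ᵥ (x' - x)) ≤ F x' - F x - (gF x ⬝ᵥ (x' - x)) ∧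
      F x' - F x - (gF x ⬝ᵥ (x' - x)) ≤ Lf / 2 * ((x' - x) ⬝ᵥ (x' - x)))
    (A : Matrix (Fin p) (Fin d) ℝ)
    (hA : ∀ v : Fin d → ℝ, (A.mulVec v) ⬝ᵥ (A.mulVec v) ≤ LA * (v ⬝ᵥ v))
    (W' : Matrix (Fin p) (Fin p) ℝ) (hWsymm : W'ᵀ = W') (hWpsd : W'.PosSemidef)
    (hWlow : ∀ y ∈ Set.range W'.mulVec,
      μW * (y ⬝ᵥ y) ≤ (W'.mulVec y) ⬝ᵥ (W'.mulVec y))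
    (hWhigh : ∀ y : Fin p → ℝ, (W'.mulVec y) ⬝ᵥ (W'.mulVec y) ≤ LW * (y ⬝ᵥ y))
    (hr : r = μf / (2 * LA)) (hγ : 0 ≤ γ) (hγ2 : γ ^ 2 = (μA + LA) / μW)
    (b : Fin p → ℝ)
    (G : (Fin d → ℝ) → (Fin p → ℝ) → ℝ)
    (hG : ∀ x y, G x y = F x +
      r / 2 * ((A.mulVec x + γ • W'.mulVec y - b) ⬝ᵥ (A.mulVec x + γ • W'.mulVec y - b))) :
    ∀ (x x' : Fin d → ℝ) (y y' : Fin p → ℝ), (∃ w, y' - y = W'.mulVec w) →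
      μf / 2 * min (1 / 2) ((μA + LA) / (4 * LA))
          * ((x' - x) ⬝ᵥ (x' - x) + (y' - y) ⬝ᵥ (y' - y))
        ≤ G x' y' - G x y
          - ((gF x + r • Aᵀ.mulVec (A.mulVec x + γ • W'.mulVec y - b)) ⬝ᵥ (x' - x))
          - (((r * γ) • W'.mulVec (A.mulVec x + γ • W'.mulVec y - b)) ⬝ᵥ (y' - y)) :=
  stmt5_general d p μf Lf LA μA μW r γ hμf hμA hμALA hμW F gF hF A hA W' hWsymm hWlow hr hγ2 b G hG
end

section
/- Let T_n denote the Chebyshev polynomial of the first kind of degree n. For 0 < μ ≤ L, n = ⌈√(L/μ)⌉, and P(t) = 1 − T_n((L + μ − 2t)/(L − μ))/T_n((L + μ)/(L − μ)), we have P(0) = 0 and 11/15 ≤ P(t) ≤ 19/15 for all t ∈ [μ, L]. -/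
/-!
For `t ∈ [μ, L]` the argument `(L + μ - 2t)/(L - μ)` lies in `[-1, 1]`, where `|T_n| ≤ 1`.
With `x = √(μ/L)` and `θ = log (1 + x) - log (1 - x)` one has `cosh θ = (L + μ)/(L - μ)` and,
from the odd power series of `θ`, `θ ≥ 2x`. Since `n x ≥ 1`, the denominator
`T_n((L + μ)/(L - μ)) = cosh (n θ)` is at least `cosh 2 > 15/4`, so the quotient in `P` has
absolute value at most `4/15`.
-/

open Polynomial Polynomial.Chebyshev

open Real Set

lemma two_mul_le_log_one_add_sub_log_one_sub {x : ℝ} (hx₀ : 0 ≤ x) (hx₁ : x < 1) :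
    2 * x ≤ log (1 + x) - log (1 - x) := by
  have h := hasSum_log_sub_log_of_abs_lt_one (abs_lt.2 ⟨by linarith, hx₁⟩)
  simpa using le_hasSum h 0 fun k _ => by positivity

lemma cosh_log_one_add_sub_log_one_sub {x : ℝ} (hx : |x| < 1) :
    cosh (log (1 + x) - log (1 - x)) = (1 + x ^ 2) / (1 - x ^ 2) := by
  obtain ⟨hx₀, hx₁⟩ := abs_lt.1 hx
  have hp : 0 < 1 + x := by linarith
  have hm : 0 < 1 - x := by linarith
  rw [cosh_eq, exp_neg, exp_sub, exp_log hp, exp_log hm,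
    show 1 - x ^ 2 = (1 + x) * (1 - x) by ring]
  field_simp
  ring

lemma fifteen_div_four_lt_cosh_two : (15 : ℝ) / 4 < cosh 2 := by
  have he : 7.38 < exp 2 := by
    rw [show (2 : ℝ) = 1 + 1 by norm_num, exp_add]
    nlinarith [exp_one_gt_d9]
  have hpos := exp_pos 2
  have hfactor : exp 2 + (exp 2)⁻¹ - 15 / 2 = ((exp 2 - 7.38) * (exp 2 - 0.12) + 0.1144) / exp 2 := by
    field_simp
    ring
  rw [cosh_eq, exp_neg, lt_div_iff₀ two_pos]
  linarith [div_pos (by nlinarith : 0 < (exp 2 - 7.38) * (exp 2 - 0.12) + 0.1144) hpos]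

lemma cosh_two_le_eval_T_real {n : ℕ} {x : ℝ} (hx₀ : 0 ≤ x) (hx₁ : x < 1) (hnx : 1 ≤ n * x) :
    cosh 2 ≤ (T ℝ n).eval ((1 + x ^ 2) / (1 - x ^ 2)) := by
  have hθ := two_mul_le_log_one_add_sub_log_one_sub hx₀ hx₁
  have hnθ : 2 ≤ n * (log (1 + x) - log (1 - x)) := by nlinarith
  have hT := T_real_cosh (log (1 + x) - log (1 - x)) n
  push_cast at hT
  rw [← cosh_log_one_add_sub_log_one_sub (abs_lt.2 ⟨by linarith, hx₁⟩), hT, cosh_le_cosh,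
    abs_two, abs_of_nonneg (by linarith)]
  exact hnθ

lemma abs_eval_T_real_div_le {n : ℤ} {x y c : ℝ} (hc : 0 < c) (hy : c ≤ (T ℝ n).eval y)
    (hx : |x| ≤ 1) : |(T ℝ n).eval x / (T ℝ n).eval y| ≤ c⁻¹ := by
  rw [abs_div, abs_of_pos (hc.trans_le hy)]
  calc |(T ℝ n).eval x| / (T ℝ n).eval y ≤ 1 / c :=
        div_le_div₀ zero_le_one (abs_eval_T_real_le_one n hx) hc hy
    _ = c⁻¹ := one_div c

lemma abs_sub_two_mul_div_sub_le_one {μ L t : ℝ} (hμL : μ < L) (ht : t ∈ Icc μ L) :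
    |(L + μ - 2 * t) / (L - μ)| ≤ 1 := by
  rw [abs_div, abs_of_pos (sub_pos.2 hμL), div_le_one (sub_pos.2 hμL), abs_le]
  constructor <;> linarith [ht.1, ht.2]

lemma fifteen_div_four_lt_eval_T_real {μ L : ℝ} {n : ℕ} (hμ : 0 < μ) (hμL : μ < L)
    (hn : √(L / μ) ≤ n) : 15 / 4 < (T ℝ n).eval ((L + μ) / (L - μ)) := by
  have hL : 0 < L := hμ.trans hμL
  set x := √(μ / L) with hx
  have hx₀ : 0 ≤ x := sqrt_nonneg _
  have hx₁ : x < 1 := (sqrt_lt' one_pos).2 (by simpa using (div_lt_one hL).2 hμL)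
  have hx_sq : x ^ 2 = μ / L := sq_sqrt (by positivity)
  have hnx : 1 ≤ n * x := by
    calc (1 : ℝ) = √(L / μ) * x := by
          rw [hx, ← sqrt_mul (by positivity), div_mul_div_comm, mul_comm L μ,
            div_self (by positivity), sqrt_one]
      _ ≤ n * x := by gcongr
  have hcosh : (1 + x ^ 2) / (1 - x ^ 2) = (L + μ) / (L - μ) := by
    have : L - μ ≠ 0 := sub_ne_zero.2 hμL.ne'
    rw [hx_sq]
    field_simp
  rw [← hcosh]
  exact fifteen_div_four_lt_cosh_two.trans_le (cosh_two_le_eval_T_real hx₀ hx₁ hnx)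

/-- Lemma 3: with `T_n` the degree-`n` Chebyshev polynomial of the first
kind, `0 < μ < L`, `n = ⌈√(L/μ)⌉`, and
`P(t) = 1 − T_n((L+μ−2t)/(L−μ)) / T_n((L+μ)/(L−μ))`, one has `P(0) = 0` and
`11/15 ≤ P(t) ≤ 19/15` for all `t ∈ [μ, L]`. -/
theorem stmt9 (μ L : ℝ) (hμ : 0 < μ) (hμL : μ < L)
    (n : ℕ) (hn : n = ⌈Real.sqrt (L / μ)⌉₊)
    (P : ℝ → ℝ)
    (hP : ∀ t : ℝ, P t = 1 -
      ((Polynomial.Chebyshev.T ℝ n).eval ((L + μ - 2 * t) / (L - μ))) /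
      ((Polynomial.Chebyshev.T ℝ n).eval ((L + μ) / (L - μ)))) :
    P 0 = 0 ∧ ∀ t ∈ Set.Icc μ L, 11 / 15 ≤ P t ∧ P t ≤ 19 / 15 := by
  have hT : 15 / 4 < (T ℝ n).eval ((L + μ) / (L - μ)) :=
    fifteen_div_four_lt_eval_T_real hμ hμL (hn ▸ Nat.le_ceil _)
  refine ⟨by rw [hP, mul_zero, sub_zero, div_self (by linarith), sub_self], fun t ht => ?_⟩
  have h := abs_le.1 <| abs_eval_T_real_div_le (by norm_num) hT.le
    (abs_sub_two_mul_div_sub_le_one hμL ht)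
  rw [hP]
  constructor <;> linarith [h.1, h.2]
end

section
/- Let M be a symmetric PSD matrix whose nonzero eigenvalues lie in [μ, L] with 0 < μ ≤ L, and let P be a polynomial with P(0) = 0 and 11/15 ≤ P(t) ≤ 19/15 for t ∈ [μ, L]. Then P(M) is symmetric PSD, λ_max(P(M)) ≤ 19/15, λ_min⁺(P(M)) ≥ 11/15, and hence the condition number λ_max(P(M))/λ_min⁺(P(M)) of P(M) is at most 19/11. -/
/-!
`P(M)` is the continuous functional calculus of the Hermitian matrix `M` applied to `P`, so its
spectrum is `P` applied to the spectrum of `M`; since `P(0) = 0`, it lies in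
`{0} ∪ [11/15, 19/15]`. Expanding in an orthonormal eigenbasis `(bᵢ)` of `P(M)` gives
`v ⬝ P(M) v = ∑ λᵢ (bᵢ ⬝ v)²` and `v ⬝ v = ∑ (bᵢ ⬝ v)²`; the `bᵢ` with `λᵢ = 0` lie in the
kernel, so for `v` orthogonal to the kernel only eigenvalues `≥ 11/15` contribute.
-/

open Matrix Polynomial Module.End

theorem OrthonormalBasis.dotProduct_eq_sum {ι n : Type*} [Fintype ι] [Fintype n]
    (b : OrthonormalBasis ι ℝ (EuclideanSpace ℝ n)) (v w : n → ℝ) :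
    v ⬝ᵥ w = ∑ i, (b i ⬝ᵥ v) * (b i ⬝ᵥ w) := by
  simpa [PiLp.inner_apply, dotProduct, mul_comm] using
    (b.sum_inner_mul_inner (WithLp.toLp 2 v) (WithLp.toLp 2 w)).symm

namespace Matrix

theorem spectrum_subset_insert_zero_of_hasEigenvalue {K n : Type*} [Field K] [Fintype n]
    [DecidableEq n] {A : Matrix n n K} {s : Set K}
    (h : ∀ t, t ≠ 0 → HasEigenvalue (toLin' A) t → t ∈ s) : spectrum K A ⊆ insert 0 s := by
  intro t ht
  by_cases ht0 : t = 0
  · exact .inl ht0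
  · exact .inr (h t ht0 (hasEigenvalue_iff_mem_spectrum.2 (by rwa [spectrum_toLin'])))

namespace IsHermitian

variable {n : Type*} [Fintype n] [DecidableEq n] {A : Matrix n n ℝ}

theorem spectrum_aeval (hA : A.IsHermitian) (q : ℝ[X]) :
    spectrum ℝ (aeval A q) = q.eval '' spectrum ℝ A := by
  rw [← cfc_polynomial q A hA.isSelfAdjoint, cfc_map_spectrum (fun x => q.eval x) A]

theorem aeval (hA : A.IsHermitian) (q : ℝ[X]) : (aeval A q).IsHermitian := by
  rw [← cfc_polynomial q A hA.isSelfAdjoint]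
  exact cfc_predicate _ A

variable (hA : A.IsHermitian)

theorem eigenvectorBasis_dotProduct_mulVec (i : n) (v : n → ℝ) :
    hA.eigenvectorBasis i ⬝ᵥ A *ᵥ v = hA.eigenvalues i * (hA.eigenvectorBasis i ⬝ᵥ v) := by
  rw [dotProduct_mulVec, ← mulVec_transpose, ← conjTranspose_eq_transpose_of_trivial, hA.eq,
    hA.mulVec_eigenvectorBasis, smul_dotProduct, smul_eq_mul]

theorem dotProduct_mulVec_self_eq_sum (v : n → ℝ) :
    v ⬝ᵥ A *ᵥ v = ∑ i, hA.eigenvalues i * (hA.eigenvectorBasis i ⬝ᵥ v) ^ 2 := by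
  rw [hA.eigenvectorBasis.dotProduct_eq_sum]
  refine Finset.sum_congr rfl fun i _ => ?_
  rw [hA.eigenvectorBasis_dotProduct_mulVec]
  ring

theorem dotProduct_mulVec_self_le {b : ℝ} (hb : ∀ i, hA.eigenvalues i ≤ b) (v : n → ℝ) :
    v ⬝ᵥ A *ᵥ v ≤ b * (v ⬝ᵥ v) := by
  rw [hA.dotProduct_mulVec_self_eq_sum, hA.eigenvectorBasis.dotProduct_eq_sum, Finset.mul_sum]
  refine Finset.sum_le_sum fun i _ => ?_
  rw [← sq]
  exact mul_le_mul_of_nonneg_right (hb i) (sq_nonneg _)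

theorem le_dotProduct_mulVec_self_of_orthogonal_ker {a : ℝ}
    (ha : ∀ i, hA.eigenvalues i ≠ 0 → a ≤ hA.eigenvalues i) {v : n → ℝ}
    (hv : ∀ w, A *ᵥ w = 0 → v ⬝ᵥ w = 0) : a * (v ⬝ᵥ v) ≤ v ⬝ᵥ A *ᵥ v := by
  rw [hA.dotProduct_mulVec_self_eq_sum, hA.eigenvectorBasis.dotProduct_eq_sum, Finset.mul_sum]
  refine Finset.sum_le_sum fun i _ => ?_
  by_cases hi : hA.eigenvalues i = 0
  · have hker : A *ᵥ hA.eigenvectorBasis i = 0 := by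
      rw [hA.mulVec_eigenvectorBasis, hi, zero_smul]
    simp [dotProduct_comm, hv _ hker]
  · rw [← sq]
    exact mul_le_mul_of_nonneg_right (ha i hi) (sq_nonneg _)

end IsHermitian
end Matrix

theorem stmt10_general (p : ℕ) (μ L : ℝ)
    (M : Matrix (Fin p) (Fin p) ℝ) (hM : M.PosSemidef)
    (hEig : ∀ t : ℝ, t ≠ 0 → Module.End.HasEigenvalue (Matrix.toLin' M) t →
      t ∈ Set.Icc μ L)
    (P : Polynomial ℝ) (hP0 : P.eval 0 = 0)
    (hPbound : ∀ t ∈ Set.Icc μ L, 11 / 15 ≤ P.eval t ∧ P.eval t ≤ 19 / 15) :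
    (Polynomial.aeval M P).PosSemidef ∧
    (∀ v : Fin p → ℝ,
      v ⬝ᵥ (Polynomial.aeval M P).mulVec v ≤ 19 / 15 * (v ⬝ᵥ v)) ∧
    (∀ v : Fin p → ℝ,
      (∀ w, (Polynomial.aeval M P).mulVec w = 0 → v ⬝ᵥ w = 0) →
      11 / 15 * (v ⬝ᵥ v) ≤ v ⬝ᵥ (Polynomial.aeval M P).mulVec v) ∧
    (∀ a b : ℝ, a ≠ 0 → b ≠ 0 →
      Module.End.HasEigenvalue (Matrix.toLin' (Polynomial.aeval M P : Matrix (Fin p) (Fin p) ℝ)) a →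
      Module.End.HasEigenvalue (Matrix.toLin' (Polynomial.aeval M P : Matrix (Fin p) (Fin p) ℝ)) b →
      a / b ≤ 19 / 11) := by
  have hN := hM.isHermitian.aeval P
  have hspec : spectrum ℝ (aeval M P) ⊆ insert 0 (Set.Icc (11 / 15) (19 / 15)) := by
    rw [hM.isHermitian.spectrum_aeval]
    rintro _ ⟨t, ht, rfl⟩
    rcases spectrum_subset_insert_zero_of_hasEigenvalue hEig ht with rfl | ht
    exacts [.inl hP0, .inr (hPbound t ht)]
  have hN_eigenvalues (i : Fin p) := hspec (hN.eigenvalues_mem_spectrum_real i)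
  have hN_hasEigenvalue (a : ℝ) (ha : a ≠ 0) (h : HasEigenvalue (toLin' (aeval M P)) a) :
      a ∈ Set.Icc (11 / 15 : ℝ) (19 / 15) :=
    (hspec (by simpa using h.mem_spectrum)).resolve_left ha
  refine ⟨posSemidef_iff_isHermitian_and_spectrum_nonneg.2 ⟨hN, fun t ht => ?_⟩,
    hN.dotProduct_mulVec_self_le fun i => ?_,
    fun v hv => hN.le_dotProduct_mulVec_self_of_orthogonal_ker (fun i hi => ?_) hv,
    fun a b ha hb hEa hEb => ?_⟩
  · rcases hspec ht with rfl | ht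
    exacts [le_refl (0 : ℝ), le_trans (by norm_num) ht.1]
  · rcases hN_eigenvalues i with hi | hi
    exacts [by rw [hi]; norm_num, hi.2]
  · exact ((hN_eigenvalues i).resolve_left hi).1
  · calc a / b ≤ (19 / 15) / (11 / 15) :=
          div_le_div₀ (by norm_num) (hN_hasEigenvalue a ha hEa).2 (by norm_num)
            (hN_hasEigenvalue b hb hEb).1
      _ = 19 / 11 := by norm_num

/-- if `M` is symmetric PSD with nonzero eigenvalues in `[μ, L]` and
`P` is a polynomial with `P(0) = 0` and `11/15 ≤ P(t) ≤ 19/15` on `[μ, L]`, then `P(M)`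
is symmetric PSD, `λ_max(P(M)) ≤ 19/15` (as a quadratic-form bound),
`λ_min⁺(P(M)) ≥ 11/15` (quadratic form on the orthogonal complement of the kernel),
and the ratio of any two nonzero eigenvalues of `P(M)` (in particular the condition
number `λ_max/λ_min⁺`) is at most `19/11`. -/
theorem stmt10 (p : ℕ) (μ L : ℝ) (hμ : 0 < μ) (hμL : μ ≤ L)
    (M : Matrix (Fin p) (Fin p) ℝ) (hM : M.PosSemidef)
    (hEig : ∀ t : ℝ, t ≠ 0 → Module.End.HasEigenvalue (Matrix.toLin' M) t →
      t ∈ Set.Icc μ L)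
    (P : Polynomial ℝ) (hP0 : P.eval 0 = 0)
    (hPbound : ∀ t ∈ Set.Icc μ L, 11 / 15 ≤ P.eval t ∧ P.eval t ≤ 19 / 15) :
    (Polynomial.aeval M P).PosSemidef ∧
    (∀ v : Fin p → ℝ,
      v ⬝ᵥ (Polynomial.aeval M P).mulVec v ≤ 19 / 15 * (v ⬝ᵥ v)) ∧
    (∀ v : Fin p → ℝ,
      (∀ w, (Polynomial.aeval M P).mulVec w = 0 → v ⬝ᵥ w = 0) →
      11 / 15 * (v ⬝ᵥ v) ≤ v ⬝ᵥ (Polynomial.aeval M P).mulVec v) ∧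
    (∀ a b : ℝ, a ≠ 0 → b ≠ 0 →
      Module.End.HasEigenvalue (Matrix.toLin' (Polynomial.aeval M P : Matrix (Fin p) (Fin p) ℝ)) a →
      Module.End.HasEigenvalue (Matrix.toLin' (Polynomial.aeval M P : Matrix (Fin p) (Fin p) ℝ)) b →
      a / b ≤ 19 / 11) :=
  stmt10_general p μ L M hM hEig P hP0 hPbound
end

section
/- Let E₁ be the p×p matrix with rows alternately (1,−1,0,...), (0,...) shifted as in the lower-bound construction, so that E₁ᵀE₁ + E₂ᵀE₂ + e₁e₁ᵀ = M, where M is the tridiagonal matrix with 2 on the diagonal and −1 on the off-diagonals. Then the quadratic function h(z) = (1/2)zᵀMz + (2α/(β−α))‖z‖² − z₁ (with 0 < α < β) attains its minimum at the point z* with coordinates z*_k = q^k, where q = (1 − √(α/β))/(1 + √(α/β)). -/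
/-!
With `c = 2α/(β − α)`, the quadratic part of `h` on `ℓ²` is `∑ₖ ((1 + c) zₖ² − zₖ zₖ₊₁)`: the
off-diagonal terms of `⟨Mz, z⟩` pair up after a telescoping sum. The ratio `q` is a root of
`q² + 1 = 2(1 + c) q`, which says that `z* = (q^(k+1))ₖ` solves `(M + 2c) z* = e₀`. Writing
`z = z* + w`, the cross terms therefore telescope to `w₀`, cancelling the linear term, and
`h z − h z* = ∑ₖ ((1 + c) wₖ² − wₖ wₖ₊₁) ≥ 0`.
-/

theorem memℓp_two_iff_summable_sq {ι : Type*} {z : ι → ℝ} :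
    Memℓp z 2 ↔ Summable fun k => z k ^ 2 := by
  rw [memℓp_gen_iff (by norm_num)]
  simp only [ENNReal.toReal_ofNat, Real.rpow_two, Real.norm_eq_abs, sq_abs]

theorem summable_mul_of_summable_sq {ι : Type*} {x y : ι → ℝ} (hx : Summable fun k => x k ^ 2)
    (hy : Summable fun k => y k ^ 2) : Summable fun k => x k * y k := by
  refine .of_norm_bounded (hx.add hy) fun k => ?_
  rw [Real.norm_eq_abs, abs_mul]
  nlinarith [sq_nonneg (|x k| - |y k|), sq_abs (x k), sq_abs (y k)]

theorem Summable.tsum_sub_succ {G : Type*} [AddCommGroup G] [TopologicalSpace G]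
    [IsTopologicalAddGroup G] [T2Space G] {f : ℕ → G} (hf : Summable f) :
    ∑' k, (f k - f (k + 1)) = f 0 := by
  rw [hf.tsum_sub ((summable_nat_add_iff 1).2 hf), hf.tsum_eq_zero_add]
  abel

theorem tsum_tridiag_mul_self {z : ℕ → ℝ} (hz : Summable fun k => z k ^ 2) :
    ∑' k, (2 * z k - z (k + 1) - (if k = 0 then 0 else z (k - 1))) * z k
      = 2 * ∑' k, (z k ^ 2 - z k * z (k + 1)) := by
  set g : ℕ → ℝ := fun k => (if k = 0 then 0 else z (k - 1)) * z k
  have hzz : Summable fun k => z k * z (k + 1) :=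
    summable_mul_of_summable_sq hz ((summable_nat_add_iff 1).2 hz)
  have hg : Summable g := (summable_nat_add_iff 1).1 (by simpa [g] using hzz)
  -- the lower off-diagonal contributes `g k`, the upper one `g (k + 1)`: they telescope
  have hsplit : ∀ k, (2 * z k - z (k + 1) - (if k = 0 then 0 else z (k - 1))) * z k
      = 2 * (z k ^ 2 - z k * z (k + 1)) - (g k - g (k + 1)) := by
    intro k; simp only [g, Nat.add_sub_cancel, if_neg k.succ_ne_zero]; ring
  rw [tsum_congr hsplit,
    ((hz.sub hzz).mul_left 2).tsum_sub (hg.sub ((summable_nat_add_iff 1).2 hg)), hg.tsum_sub_succ,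
    tsum_mul_left]
  simp [g]

def tridiagEnergy (c : ℝ) (x : ℕ → ℝ) (k : ℕ) : ℝ := (1 + c) * x k ^ 2 - x k * x (k + 1)

theorem summable_tridiagEnergy (c : ℝ) {x : ℕ → ℝ} (hx : Summable fun k => x k ^ 2) :
    Summable (tridiagEnergy c x) :=
  (hx.mul_left _).sub (summable_mul_of_summable_sq hx ((summable_nat_add_iff 1).2 hx))

theorem half_tsum_tridiag_mul_self_add {z : ℕ → ℝ} (hz : Summable fun k => z k ^ 2) (c : ℝ) :
    1 / 2 * (∑' k, (2 * z k - z (k + 1) - (if k = 0 then 0 else z (k - 1))) * z k)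
      + c * ∑' k, z k ^ 2 = ∑' k, tridiagEnergy c z k := by
  have hzz := summable_mul_of_summable_sq hz ((summable_nat_add_iff 1).2 hz)
  have hsplit : ∑' k, tridiagEnergy c z k
      = ∑' k, (z k ^ 2 - z k * z (k + 1)) + c * ∑' k, z k ^ 2 := by
    rw [← tsum_mul_left, ← (hz.sub hzz).tsum_add (hz.mul_left c)]
    exact tsum_congr fun k => by simp only [tridiagEnergy]; ring
  rw [tsum_tridiag_mul_self hz, hsplit]
  ring

theorem tsum_tridiagEnergy_nonneg {c : ℝ} (hc : 0 ≤ c) {x : ℕ → ℝ}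
    (hx : Summable fun k => x k ^ 2) : 0 ≤ ∑' k, tridiagEnergy c x k := by
  -- the energy dominates the telescoping sequence `(xₖ² − xₖ₊₁²) / 2`
  set t : ℕ → ℝ := fun k => x k ^ 2 / 2
  have hle : ∀ k, t k - t (k + 1) ≤ tridiagEnergy c x k := fun k => by
    simp only [t, tridiagEnergy]
    nlinarith [sq_nonneg (x k - x (k + 1)), mul_nonneg hc (sq_nonneg (x k))]
  have ht : Summable t := hx.div_const 2
  calc 0 ≤ t 0 := by positivity
    _ = ∑' k, (t k - t (k + 1)) := ht.tsum_sub_succ.symm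
    _ ≤ ∑' k, tridiagEnergy c x k :=
      (ht.sub ((summable_nat_add_iff 1).2 ht)).tsum_le_tsum hle (summable_tridiagEnergy c hx)

theorem summable_sq_pow {q : ℝ} (hq : |q| < 1) : Summable fun k => (q ^ k) ^ 2 :=
  (summable_geometric_of_lt_one (sq_nonneg q) (by nlinarith [abs_nonneg q, sq_abs q])).congr
    fun k => by ring

theorem tridiagEnergy_geometric_add {c q : ℝ} (hq : q ^ 2 + 1 = 2 * (1 + c) * q)
    (w : ℕ → ℝ) (k : ℕ) :
    tridiagEnergy c (fun n => q ^ (n + 1) + w n) k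
      = tridiagEnergy c (fun n => q ^ (n + 1)) k + tridiagEnergy c w k
        + (q ^ k * w k - q ^ (k + 1) * w (k + 1)) := by
  simp only [tridiagEnergy]
  linear_combination (-(q ^ k * w k)) * hq

theorem tsum_tridiagEnergy_geometric_add {c q : ℝ} (hq : q ^ 2 + 1 = 2 * (1 + c) * q)
    (hq1 : |q| < 1) {w : ℕ → ℝ} (hw : Summable fun k => w k ^ 2) :
    ∑' k, tridiagEnergy c (fun n => q ^ (n + 1) + w n) k
      = ∑' k, tridiagEnergy c (fun n => q ^ (n + 1)) k + ∑' k, tridiagEnergy c w k + w 0 := by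
  have hgeo := summable_sq_pow hq1
  have hy : Summable fun k => (q ^ (k + 1)) ^ 2 := (summable_nat_add_iff 1).2 hgeo
  have hb : Summable fun k => q ^ k * w k := summable_mul_of_summable_sq hgeo hw
  rw [tsum_congr (tridiagEnergy_geometric_add hq w),
    ((summable_tridiagEnergy c hy).add (summable_tridiagEnergy c hw)).tsum_add
      (hb.sub ((summable_nat_add_iff 1).2 hb)),
    (summable_tridiagEnergy c hy).tsum_add (summable_tridiagEnergy c hw), hb.tsum_sub_succ]
  simp

theorem tsum_tridiagEnergy_geometric_sub_le {c q : ℝ} (hc : 0 ≤ c)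
    (hq : q ^ 2 + 1 = 2 * (1 + c) * q) (hq1 : |q| < 1) {z : ℕ → ℝ}
    (hz : Summable fun k => z k ^ 2) :
    ∑' k, tridiagEnergy c (fun n => q ^ (n + 1)) k - q
      ≤ ∑' k, tridiagEnergy c z k - z 0 := by
  have hy : Summable fun k => (q ^ (k + 1)) ^ 2 :=
    (summable_nat_add_iff 1).2 (summable_sq_pow hq1)
  obtain ⟨w, rfl⟩ : ∃ w : ℕ → ℝ, z = fun n => q ^ (n + 1) + w n :=
    ⟨fun n => z n - q ^ (n + 1), funext fun n => by ring⟩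
  have hw : Summable fun k => w k ^ 2 :=
    ((hz.add hy).sub ((summable_mul_of_summable_sq hz hy).mul_left 2)).congr fun k => by ring
  rw [tsum_tridiagEnergy_geometric_add hq hq1 hw]
  simp only [zero_add, pow_one]
  linarith [tsum_tridiagEnergy_nonneg hc hw]

theorem sq_add_one_eq_of_eq_ratio_sqrt {α β q : ℝ} (hα : 0 ≤ α) (hαβ : α < β)
    (hq : q = (1 - √(α / β)) / (1 + √(α / β))) :
    q ^ 2 + 1 = 2 * (1 + 2 * α / (β - α)) * q := by
  have hβ : 0 < β := hα.trans_lt hαβ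
  obtain ⟨s, hs0, rfl, rfl⟩ : ∃ s, 0 ≤ s ∧ α = s ^ 2 * β ∧ q = (1 - s) / (1 + s) :=
    ⟨_, Real.sqrt_nonneg _, by rw [Real.sq_sqrt (by positivity)]; field_simp, hq⟩
  have hs1 : s ^ 2 < 1 := by nlinarith
  have hβα : β - s ^ 2 * β ≠ 0 := by nlinarith
  have : 1 - s ^ 2 ≠ 0 := by linarith
  field_simp
  ring

theorem abs_one_sub_div_one_add_lt_one {s : ℝ} (hs : 0 < s) : |(1 - s) / (1 + s)| < 1 := by
  rw [abs_div, abs_of_pos (by linarith : 0 < 1 + s), div_lt_one (by linarith), abs_sub_lt_iff]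
  constructor <;> linarith

/-- in the semi-infinite (ℓ²) lower-bound construction, with `M` the
tridiagonal operator `(Mz)_k = 2z_k − z_{k−1} − z_{k+1}` (first row `2z_1 − z_2`),
the quadratic function `h(z) = (1/2)zᵀMz + (2α/(β−α))‖z‖² − z_1` (with `0 < α < β`)
attains its minimum over ℓ² at the point `z*` with coordinates `z*_k = q^k`,
`q = (1 − √(α/β))/(1 + √(α/β))`. Sequences are indexed from `0`, so coordinate `k`
here is coordinate `k+1` of the paper and `z*` is `k ↦ q^(k+1)`. -/
theorem stmt14 (α β : ℝ) (hα : 0 < α) (hαβ : α < β)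
    (Mop : (ℕ → ℝ) → (ℕ → ℝ))
    (hM : ∀ (z : ℕ → ℝ) (k : ℕ),
      Mop z k = 2 * z k - z (k + 1) - (if k = 0 then 0 else z (k - 1)))
    (h : (ℕ → ℝ) → ℝ)
    (hh : ∀ z : ℕ → ℝ, h z =
      1 / 2 * (∑' k, Mop z k * z k) + (2 * α / (β - α)) * (∑' k, (z k) ^ 2) - z 0)
    (q : ℝ) (hq : q = (1 - Real.sqrt (α / β)) / (1 + Real.sqrt (α / β)))
    (zstar : ℕ → ℝ) (hzstar : ∀ k, zstar k = q ^ (k + 1)) :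
    Memℓp zstar 2 ∧ ∀ z : ℕ → ℝ, Memℓp z 2 → h zstar ≤ h z := by
  have hβ : 0 < β := hα.trans hαβ
  have hc : 0 ≤ 2 * α / (β - α) := div_nonneg (by positivity) (sub_pos.2 hαβ).le
  have hq1 : |q| < 1 := hq ▸ abs_one_sub_div_one_add_lt_one (Real.sqrt_pos.2 (div_pos hα hβ))
  have hh' : ∀ z, Summable (fun k => z k ^ 2) →
      h z = ∑' k, tridiagEnergy (2 * α / (β - α)) z k - z 0 := fun z hz => by
    simp only [hh, hM, half_tsum_tridiag_mul_self_add hz]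
  obtain rfl : zstar = fun k => q ^ (k + 1) := funext hzstar
  have hstar : Summable fun k => (q ^ (k + 1)) ^ 2 :=
    (summable_nat_add_iff 1).2 (summable_sq_pow hq1)
  refine ⟨memℓp_two_iff_summable_sq.2 hstar, fun z hz => ?_⟩
  rw [memℓp_two_iff_summable_sq] at hz
  rw [hh' _ hz, hh' _ hstar, zero_add, pow_one]
  exact tsum_tridiagEnergy_geometric_sub_le hc (sq_add_one_eq_of_eq_ratio_sqrt hα.le hαβ hq) hq1
    hz
end
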